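/- The minimum number of generators of B_n tends to infinity with n; more precisely, any generating set of B_n must contain, for each k with 2 ≤ k ≤ n, an element whose k-th coordinate is ∂D (namely d_k, up to the structural constraints), so B_n requires at least n − 1 generators. -/
import Mathlib


/-- The three-element set `M = {0, D, ∂D}`. -/
inductive Mc : Type
  | z : Mc
  | D : Mc
  | pD : Mc
deriving DecidableEq

/-- The fixed-point-free involution `∂` exchanging `D` and `∂D`
(its value on `0` is irrelevant to the operations below). -/
def pd : Mc → Mc
  | Mc.D => Mc.pD
  | Mc.pD => Mc.D
  | Mc.z => Mc.z

/-- Height-1 meet on `M`: `x ∧ y = x` if `x = y`, else `0`. -/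
def mmt (x y : Mc) : Mc := if x = y then x else Mc.z

/-- `J(x,y,w) = x` if `x = y`; `x ∧ w` if `x = ∂y`; `0` otherwise. -/
def mJ (x y w : Mc) : Mc := if x = y then x else if x = pd y then mmt x w else Mc.z

/-- `J'(x,y,w) = x ∧ w` if `x = y`; `x` if `x = ∂y`; `0` otherwise. -/
def mJ' (x y w : Mc) : Mc := if x = y then mmt x w else if x = pd y then x else Mc.z

/-- Pointwise meet on `M^n`. -/
def vmt {n : ℕ} (x y : Fin n → Mc) : Fin n → Mc := fun l => mmt (x l) (y l)

/-- Pointwise `J` on `M^n`. -/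
def vJ {n : ℕ} (x y w : Fin n → Mc) : Fin n → Mc := fun l => mJ (x l) (y l) (w l)

/-- Pointwise `J'` on `M^n`. -/
def vJ' {n : ℕ} (x y w : Fin n → Mc) : Fin n → Mc := fun l => mJ' (x l) (y l) (w l)

/-- The zero tuple in `M^n`. -/
def vz (n : ℕ) : Fin n → Mc := fun _ => Mc.z

/-- `b_i`: `D` in (1-indexed) coordinates `1..i`, `0` afterwards. -/
def vb (n i : ℕ) : Fin n → Mc := fun l => if l.val < i then Mc.D else Mc.z

/-- `d_i`: `D` in coordinates `1..i-1`, `∂D` in coordinate `i`, `0` afterwards. -/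
def vd (n i : ℕ) : Fin n → Mc := fun l =>
  if l.val + 1 < i then Mc.D else if l.val + 1 = i then Mc.pD else Mc.z

/-- `c_i`: `0` in coordinate `1`, `D` in coordinates `2..i`, `0` afterwards. -/
def vc (n i : ℕ) : Fin n → Mc := fun l =>
  if l.val = 0 then Mc.z else if l.val < i then Mc.D else Mc.z

/-- `a = b_1 = (D,0,…,0)`. -/
def va (n : ℕ) : Fin n → Mc := vb n 1

/-- The subuniverse `B_n` of `M^n`, generated by `{a} ∪ {b_i, d_i : 2 ≤ i ≤ n}`
under the pointwise operations `∧`, `J`, `J'`. -/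
inductive Bn (n : ℕ) : (Fin n → Mc) → Prop
  | gen_a : Bn n (va n)
  | gen_b (i : ℕ) (h2 : 2 ≤ i) (hn : i ≤ n) : Bn n (vb n i)
  | gen_d (i : ℕ) (h2 : 2 ≤ i) (hn : i ≤ n) : Bn n (vd n i)
  | cmt {x y} : Bn n x → Bn n y → Bn n (vmt x y)
  | cJ {x y w} : Bn n x → Bn n y → Bn n w → Bn n (vJ x y w)
  | cJ' {x y w} : Bn n x → Bn n y → Bn n w → Bn n (vJ' x y w)

/-- The congruence of the algebra with universe `C` (a subuniverse of `M^n`) generated by the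
pair `(a, b)`: the smallest equivalence relation on `C` containing `(a,b)` and compatible with
the operations `∧`, `J`, `J'`. -/
inductive CgC {n : ℕ} (C : (Fin n → Mc) → Prop) (a b : Fin n → Mc) :
    (Fin n → Mc) → (Fin n → Mc) → Prop
  | base : CgC C a b a b
  | refl {x} (hx : C x) : CgC C a b x x
  | symm {x y} : CgC C a b x y → CgC C a b y x
  | trans {x y z} : CgC C a b x y → CgC C a b y z → CgC C a b x z
  | cmt {x x' y y'} : CgC C a b x x' → CgC C a b y y' → CgC C a b (vmt x y) (vmt x' y')
  | cJ {x x' y y' w w'} : CgC C a b x x' → CgC C a b y y' → CgC C a b w w' →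
      CgC C a b (vJ x y w) (vJ x' y' w')
  | cJ' {x x' y y' w w'} : CgC C a b x x' → CgC C a b y y' → CgC C a b w w' →
      CgC C a b (vJ' x y w) (vJ' x' y' w')

/-- Unary polynomials of the algebra with universe `C`: functions built by composition from
the operations `∧`, `J`, `J'`, constants from `C`, and the identity. -/
inductive PolyC {n : ℕ} (C : (Fin n → Mc) → Prop) : ((Fin n → Mc) → (Fin n → Mc)) → Prop
  | id : PolyC C id
  | const {c} (h : C c) : PolyC C (fun _ => c)
  | pmt {f g} : PolyC C f → PolyC C g → PolyC C (fun x => vmt (f x) (g x))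
  | pJ {f g h} : PolyC C f → PolyC C g → PolyC C h → PolyC C (fun x => vJ (f x) (g x) (h x))
  | pJ' {f g h} : PolyC C f → PolyC C g → PolyC C h → PolyC C (fun x => vJ' (f x) (g x) (h x))

/-- Fundamental translations of the algebra with universe `C`: unary polynomials obtained from
one of the operations `∧`, `J`, `J'` by fixing all but one argument at constants from `C`. -/
inductive FT {n : ℕ} (C : (Fin n → Mc) → Prop) : ((Fin n → Mc) → (Fin n → Mc)) → Prop
  | mtL {c} (h : C c) : FT C (fun x => vmt x c)
  | mtR {c} (h : C c) : FT C (fun x => vmt c x)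
  | J1 {c d} (hc : C c) (hd : C d) : FT C (fun x => vJ x c d)
  | J2 {c d} (hc : C c) (hd : C d) : FT C (fun x => vJ c x d)
  | J3 {c d} (hc : C c) (hd : C d) : FT C (fun x => vJ c d x)
  | J'1 {c d} (hc : C c) (hd : C d) : FT C (fun x => vJ' x c d)
  | J'2 {c d} (hc : C c) (hd : C d) : FT C (fun x => vJ' c x d)
  | J'3 {c d} (hc : C c) (hd : C d) : FT C (fun x => vJ' c d x)

/-- The support of a tuple: the set of coordinates where it is nonzero. -/
def suppF {n : ℕ} (x : Fin n → Mc) : Finset (Fin n) :=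
  Finset.univ.filter (fun l => x l ≠ Mc.z)

/-- The subuniverse of `M^n` generated by a set `G` under `∧`, `J`, `J'`. -/
inductive SgM {n : ℕ} (G : Set (Fin n → Mc)) : (Fin n → Mc) → Prop
  | gen {x} (h : x ∈ G) : SgM G x
  | cmt {x y} : SgM G x → SgM G y → SgM G (vmt x y)
  | cJ {x y w} : SgM G x → SgM G y → SgM G w → SgM G (vJ x y w)
  | cJ' {x y w} : SgM G x → SgM G y → SgM G w → SgM G (vJ' x y w)

lemma mmt_pD {x y : Mc} (h : mmt x y = Mc.pD) : x = Mc.pD := by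
  cases x <;> cases y <;> simp_all [mmt]

lemma mJ_pD {x y w : Mc} (h : mJ x y w = Mc.pD) : x = Mc.pD := by
  cases x <;> cases y <;> cases w <;> simp_all [mJ, mmt, pd]

lemma mJ'_pD {x y w : Mc} (h : mJ' x y w = Mc.pD) : x = Mc.pD := by
  cases x <;> cases y <;> cases w <;> simp_all [mJ', mmt, pd]

lemma SgM_pD {n : ℕ} {G : Set (Fin n → Mc)} {z : Fin n → Mc} (h : SgM G z) :
    ∀ l, z l = Mc.pD → ∃ g ∈ G, g l = Mc.pD := by
  induction h with
  | gen hx => exact fun l hl => ⟨_, hx, hl⟩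
  | cmt _ _ ih _ => exact fun l hl => ih l (mmt_pD hl)
  | cJ _ _ _ ih _ _ => exact fun l hl => ih l (mJ_pD hl)
  | cJ' _ _ _ ih _ _ => exact fun l hl => ih l (mJ'_pD hl)

lemma Bn_pD_unique {n : ℕ} {x : Fin n → Mc} (h : Bn n x) :
    ∀ l l', x l = Mc.pD → x l' = Mc.pD → l = l' := by
  induction h with
  | gen_a =>
    intro l l' hl hl'
    simp only [va, vb] at hl; split_ifs at hl <;> simp_all
  | gen_b i h2 hn =>
    intro l l' hl hl'
    simp only [vb] at hl; split_ifs at hl <;> simp_all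
  | gen_d i h2 hn =>
    intro l l' hl hl'
    simp only [vd] at hl hl'
    split_ifs at hl <;> split_ifs at hl' <;> simp_all
    exact Fin.ext (by omega)
  | cmt _ _ ih _ => exact fun l l' hl hl' => ih l l' (mmt_pD hl) (mmt_pD hl')
  | cJ _ _ _ ih _ _ => exact fun l l' hl hl' => ih l l' (mJ_pD hl) (mJ_pD hl')
  | cJ' _ _ _ ih _ _ => exact fun l l' hl hl' => ih l l' (mJ'_pD hl) (mJ'_pD hl')

/-- Any generating set of `B_n` must contain, for each `2 ≤ k ≤ n`, an element whose `k`-th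
coordinate is `∂D`; hence `B_n` requires at least `n − 1` generators, and the minimum number
of generators of `B_n` tends to infinity with `n`. -/
theorem Bn_needs_many_generators {n : ℕ} (hn : 2 ≤ n)
    (G : Finset (Fin n → Mc))
    (hgen : ∀ x, SgM (↑G : Set (Fin n → Mc)) x ↔ Bn n x) :
    (∀ (k : ℕ) (h2 : 2 ≤ k) (hk : k ≤ n), ∃ x ∈ G, x ⟨k - 1, by omega⟩ = Mc.pD) ∧
    n - 1 ≤ G.card := by
  have part1 : ∀ (k : ℕ) (h2 : 2 ≤ k) (hk : k ≤ n), ∃ x ∈ G, x ⟨k - 1, by omega⟩ = Mc.pD := by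
    intro k h2 hk
    have hsg : SgM (↑G : Set (Fin n → Mc)) (vd n k) :=
      (hgen (vd n k)).mpr (Bn.gen_d k h2 hk)
    refine SgM_pD hsg ⟨k - 1, by omega⟩ ?_
    simp only [vd]
    have : ¬ (k - 1 + 1 < k) := by omega
    rw [if_neg this, if_pos (by omega)]
  refine ⟨part1, ?_⟩
  classical
  have key : ∀ k (_ : 2 ≤ k) (_ : k ≤ n), ∃ x ∈ G, x ⟨k - 1, by omega⟩ = Mc.pD := part1
  set f : ℕ → (Fin n → Mc) := fun k =>
    if h : 2 ≤ k ∧ k ≤ n then (key k h.1 h.2).choose else (fun _ => Mc.z) with hf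
  have hmem : ∀ k ∈ Finset.Icc 2 n, f k ∈ G := by
    intro k hk
    rw [Finset.mem_Icc] at hk
    simp only [hf, dif_pos hk]
    exact (key k hk.1 hk.2).choose_spec.1
  have hval : ∀ k (h2 : 2 ≤ k) (hk : k ≤ n), f k ⟨k - 1, by omega⟩ = Mc.pD := by
    intro k h2 hk
    simp only [hf, dif_pos (And.intro h2 hk)]
    exact (key k h2 hk).choose_spec.2
  have hinj : Set.InjOn f ↑(Finset.Icc 2 n) := by
    intro k hk k' hk' hfe
    simp only [Finset.coe_Icc, Set.mem_Icc] at hk hk'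
    have h1 := hval k hk.1 hk.2
    have h2 := hval k' hk'.1 hk'.2
    rw [← hfe] at h2
    have hB : Bn n (f k) := (hgen (f k)).mp (SgM.gen (hmem k (Finset.mem_Icc.mpr hk)))
    have h3 : k - 1 = k' - 1 := congrArg Fin.val (Bn_pD_unique hB _ _ h1 h2)
    omega
  have := Finset.card_le_card_of_injOn f hmem hinj
  rwa [Nat.card_Icc, show n + 1 - 2 = n - 1 by omega] at this
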